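/- arXiv:2601.14189 — 4 statements merged into one kernel-verified Lean document; each statement's English description precedes it below -/
import Mathlib

section
/- For all integers n ≥ 1 and real t > 0, the finite sum \sum_{i=1}^{n} (t;t^2)_i (t^{2n};t^2)_i (t^{-2n};t^2)_i t^{2i} / ((-t;t^2)_i (-t^2;t^2)_i (t^2;t^2)_i) equals 2t^n/(1+t^{2n}) - 1, where (a;q)_i = \prod_{j=0}^{i-1}(1 - a q^j) is the q-Pochhammer symbol. (The sum may equivalently be extended to infinity since (t^{-2n};t^2)_i = 0 for i > n.) -/
/-- The q-Pochhammer symbol `(a;q)_n = ∏_{j=0}^{n-1} (1 - a q^j)`. -/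
noncomputable def qPoch (a q : ℝ) (n : ℕ) : ℝ := ∏ j ∈ Finset.range n, (1 - a * q ^ j)

/-!
With `q = t²`, the sum (including the term `i = 0`, which is `1`) is the balanced terminating
`₃φ₂(t, qⁿ, q⁻ⁿ; -t, -q; q, q)`, so the identity is a case of the q-Pfaff–Saalschütz sum; we prove
it directly by creative telescoping. Replace `qⁿ` by a free parameter `y` in the summand `T(y, i)`.
There is an explicit certificate `G(y, i)` with
`T(yq, i + 1) · r(y) - T(y, i + 1) = G(y, i + 1) - G(y, i)` and `r(y) - 1 = G(y, 0)`, where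
`r(y) = (1 + qy) / (t (1 + y))`. At `y = qⁿ` the factor `(q⁻ⁿ; q)_{n+1} = 0` kills both the
summand and the certificate at index `n + 1`, so `S(n) = ∑_{i ≤ n} T(qⁿ, i)` satisfies
`S(n + 1) · r(qⁿ) = S(n)`. From `S(0) = 1` this gives `S(n) = 2tⁿ / (1 + q^n)`.
-/

open Finset

@[simp]
lemma qPoch_zero (a q : ℝ) : qPoch a q 0 = 1 := prod_range_zero _

lemma qPoch_succ (a q : ℝ) (n : ℕ) : qPoch a q (n + 1) = qPoch a q n * (1 - a * q ^ n) :=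
  prod_range_succ _ n

lemma qPoch_succ' (a q : ℝ) (n : ℕ) : qPoch a q (n + 1) = (1 - a) * qPoch (a * q) q n := by
  simp only [qPoch, prod_range_succ', pow_zero, mul_one, pow_succ, mul_assoc, mul_comm q]
  ring

lemma qPoch_inv_pow_eq_zero {q : ℝ} (hq : q ≠ 0) (n : ℕ) : qPoch (q ^ n)⁻¹ q (n + 1) = 0 := by
  rw [qPoch_succ, inv_mul_cancel₀ (pow_ne_zero n hq), sub_self, mul_zero]

lemma qPoch_neg_pos {a q : ℝ} (ha : 0 ≤ a) (hq : 0 ≤ q) (n : ℕ) : 0 < qPoch (-a) q n :=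
  prod_pos fun j _ => by have := mul_nonneg ha (pow_nonneg hq j); linarith

lemma qPoch_self_ne_zero {q : ℝ} (hq : 0 < q) (hq1 : q ≠ 1) (n : ℕ) : qPoch q q n ≠ 0 := by
  refine prod_ne_zero_iff.2 fun j _ => sub_ne_zero.2 fun h => ?_
  rw [← pow_succ'] at h
  exact hq1 ((pow_eq_one_iff_of_nonneg hq.le j.succ_ne_zero).1 h.symm)

noncomputable def qSummand (t y : ℝ) (i : ℕ) : ℝ :=
  qPoch t (t ^ 2) i * qPoch y (t ^ 2) i * qPoch y⁻¹ (t ^ 2) i * t ^ (2 * i) /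
    (qPoch (-t) (t ^ 2) i * qPoch (-t ^ 2) (t ^ 2) i * qPoch (t ^ 2) (t ^ 2) i)

noncomputable def wzCertificate (t y : ℝ) (i : ℕ) : ℝ :=
  (1 - t * y) / (t * (1 + y)) *
    (qPoch t (t ^ 2) (i + 1) * qPoch (y * t ^ 2) (t ^ 2) i * qPoch y⁻¹ (t ^ 2) i) /
    (qPoch (-t) (t ^ 2) i * qPoch (-t ^ 2) (t ^ 2) i * qPoch (t ^ 2) (t ^ 2) i)

@[simp]
lemma qSummand_zero (t y : ℝ) : qSummand t y 0 = 1 := by simp [qSummand]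

lemma qSummand_wz {t y : ℝ} (ht : 0 < t) (ht1 : t ≠ 1) (hy : 0 < y) (i : ℕ) :
    qSummand t (y * t ^ 2) (i + 1) * ((1 + t ^ 2 * y) / (t * (1 + y))) - qSummand t y (i + 1)
      = wzCertificate t y (i + 1) - wzCertificate t y i := by
  have hq1 : t ^ 2 ≠ 1 := fun h => ht1 ((pow_eq_one_iff_of_nonneg ht.le two_ne_zero).1 h)
  have hA : qPoch (-t) (t ^ 2) i ≠ 0 := (qPoch_neg_pos ht.le (sq_nonneg t) i).ne'
  have hB : qPoch (-t ^ 2) (t ^ 2) i ≠ 0 := (qPoch_neg_pos (sq_nonneg t) (sq_nonneg t) i).ne'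
  obtain ⟨hC, hC'⟩ := mul_ne_zero_iff.1 <| qPoch_succ (t ^ 2) (t ^ 2) i ▸
    qPoch_self_ne_zero (pow_pos ht 2) hq1 (i + 1)
  have hD : 1 + t * (t ^ 2) ^ i ≠ 0 := by positivity
  have hE : 1 + t ^ 2 * (t ^ 2) ^ i ≠ 0 := by positivity
  -- Peel the last factor off every symbol: what is left is a rational identity in `t`, `y`,
  -- `(t ^ 2) ^ i` and the symbols at index `i`.
  simp only [qSummand, wzCertificate]
  rw [qPoch_succ _ _ (i + 1), qPoch_succ t, qPoch_succ (y * t ^ 2), qPoch_succ y⁻¹,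
    qPoch_succ' y, qPoch_succ' (y * t ^ 2)⁻¹, qPoch_succ (-t), qPoch_succ (-t ^ 2),
    qPoch_succ (t ^ 2) _ i, show (y * t ^ 2)⁻¹ * t ^ 2 = y⁻¹ by field_simp,
    show t ^ (2 * (i + 1)) = t ^ 2 * (t ^ 2) ^ i by ring, pow_succ (t ^ 2) i]
  simp only [neg_mul, sub_neg_eq_add]
  field_simp
  ring

lemma sum_qSummand_sub_eq_wzCertificate {t y : ℝ} (ht : 0 < t) (ht1 : t ≠ 1) (hy : 0 < y)
    (N : ℕ) :
    ∑ i ∈ range (N + 1),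
        (qSummand t (y * t ^ 2) i * ((1 + t ^ 2 * y) / (t * (1 + y))) - qSummand t y i)
      = wzCertificate t y N := by
  induction N with
  | zero =>
    simp only [zero_add, sum_range_one, qSummand_zero, wzCertificate, qPoch_succ, qPoch_zero]
    field_simp
    ring
  | succ N ih => rw [sum_range_succ, ih, qSummand_wz ht ht1 hy]; ring

lemma sum_qSummand_pow {t : ℝ} (ht : 0 < t) (ht1 : t ≠ 1) (n : ℕ) :
    ∑ i ∈ range (n + 1), qSummand t ((t ^ 2) ^ n) i = 2 * t ^ n / (1 + (t ^ 2) ^ n) := by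
  induction n with
  | zero => norm_num
  | succ n ih =>
    have hq : t ^ 2 ≠ 0 := by positivity
    have hy : 0 < (t ^ 2) ^ n := by positivity
    have hT : qSummand t ((t ^ 2) ^ n) (n + 1) = 0 := by
      simp [qSummand, qPoch_inv_pow_eq_zero hq]
    have hG : wzCertificate t ((t ^ 2) ^ n) (n + 1) = 0 := by
      simp [wzCertificate, qPoch_inv_pow_eq_zero hq]
    have key := sum_qSummand_sub_eq_wzCertificate ht ht1 hy (n + 1)
    rw [sum_sub_distrib, ← sum_mul, hG, sum_range_succ (qSummand t ((t ^ 2) ^ n)), hT, add_zero,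
      ih, sub_eq_zero, ← pow_succ, eq_div_iff (by positivity)] at key
    rw [eq_div_iff (by positivity), pow_succ t n, ← mul_assoc, ← key]
    field_simp
    ring

theorem sum_qPoch_eq_general (n : ℕ) (t : ℝ) (ht : 0 < t) (ht1 : t ≠ 1) :
    ∑ i ∈ Finset.Icc 1 n,
      qPoch t (t ^ 2) i * qPoch (t ^ (2 * n)) (t ^ 2) i *
        qPoch ((t ^ (2 * n))⁻¹) (t ^ 2) i * t ^ (2 * i) /
        (qPoch (-t) (t ^ 2) i * qPoch (-t ^ 2) (t ^ 2) i * qPoch (t ^ 2) (t ^ 2) i)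
      = 2 * t ^ n / (1 + t ^ (2 * n)) - 1 := by
  have h := sum_qSummand_pow ht ht1 n
  rw [← pow_mul, range_eq_Ico, sum_eq_sum_Ico_succ_bot (Nat.add_one_pos n), qSummand_zero,
    zero_add, Ico_add_one_right_eq_Icc] at h
  rw [← h, add_sub_cancel_left]
  rfl

theorem sum_qPoch_eq (n : ℕ) (hn : 1 ≤ n) (t : ℝ) (ht : 0 < t) (ht1 : t ≠ 1) :
    ∑ i ∈ Finset.Icc 1 n,
      qPoch t (t ^ 2) i * qPoch (t ^ (2 * n)) (t ^ 2) i *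
        qPoch ((t ^ (2 * n))⁻¹) (t ^ 2) i * t ^ (2 * i) /
        (qPoch (-t) (t ^ 2) i * qPoch (-t ^ 2) (t ^ 2) i * qPoch (t ^ 2) (t ^ 2) i)
      = 2 * t ^ n / (1 + t ^ (2 * n)) - 1 :=
  sum_qPoch_eq_general n t ht ht1
end

section
/- For all integers n ≥ 0 and real t > 0 with t ≠ 1, the q-Saalschütz identity specializes to: (-1;t^2)_n (-t^{-(2n-1)};t^2)_n / ((-t;t^2)_n (-t^{-2n};t^2)_n) = 2 t^n / (1 + t^{2n}). -/
open Finset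

theorem qPoch_mul_one_sub (a q : ℝ) (n : ℕ) :
    qPoch a q n * (1 - a * q ^ n) = (1 - a) * qPoch (a * q) q n := by
  calc qPoch a q n * (1 - a * q ^ n) = ∏ j ∈ range (n + 1), (1 - a * q ^ j) :=
        (prod_range_succ _ n).symm
    _ = (1 - a) * qPoch (a * q) q n := by
        rw [prod_range_succ', mul_comm, pow_zero, mul_one]
        simp only [qPoch, pow_succ, mul_assoc, mul_comm q]

theorem qPoch_pos {a q : ℝ} (ha : a ≤ 0) (hq : 0 ≤ q) (n : ℕ) : 0 < qPoch a q n :=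
  prod_pos fun j _ => by nlinarith [pow_nonneg hq j]

theorem qPoch_eq_mul_qPoch_reflect {a q : ℝ} (ha : a ≠ 0) (hq : q ≠ 0) (n : ℕ) :
    qPoch a q n = (-a) ^ n * q ^ n.choose 2 * qPoch (q ^ (1 - n : ℤ) / a) q n := by
  have hfactor : ∀ j ∈ range n,
      1 - a * q ^ j = -a * q ^ j * (1 - q ^ (1 - n : ℤ) / a * q ^ (n - 1 - j)) := by
    intro j hj
    have hjn := mem_range.mp hj
    have hpow : q ^ (1 - n : ℤ) * q ^ j * q ^ (n - 1 - j) = 1 := by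
      rw [mul_assoc, ← pow_add, ← zpow_natCast, ← zpow_add₀ hq,
        show (1 - n : ℤ) + ((j + (n - 1 - j) : ℕ) : ℤ) = 0 by omega, zpow_zero]
    field_simp
    linear_combination -hpow
  rw [qPoch, prod_congr rfl hfactor, prod_mul_distrib, prod_mul_distrib, prod_const, card_range,
    prod_pow_eq_pow_sum, sum_range_id, ← Nat.choose_two_right, qPoch,
    prod_range_reflect (fun j => 1 - q ^ (1 - n : ℤ) / a * q ^ j)]

theorem q_saalschutz_special_general (n : ℕ) (t : ℝ) (ht : 0 < t) :
    qPoch (-1) (t ^ 2) n * qPoch (-(t ^ (1 - 2 * (n : ℤ)))) (t ^ 2) n /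
      (qPoch (-t) (t ^ 2) n * qPoch (-(t ^ (2 * n))⁻¹) (t ^ 2) n)
      = 2 * t ^ n / (1 + t ^ (2 * n)) := by
  have ht0 : t ≠ 0 := ht.ne'
  have hq : t ^ 2 ≠ 0 := pow_ne_zero 2 ht0
  have hreflect_num : (t ^ 2) ^ (1 - n : ℤ) / -(t ^ (1 - 2 * (n : ℤ))) = -t := by
    rw [← zpow_natCast t 2, ← zpow_mul, div_neg, neg_inj, div_eq_iff (zpow_ne_zero _ ht0),
      ← zpow_one_add₀ ht0]
    ring_nf
  have hreflect_den : (t ^ 2) ^ (1 - n : ℤ) / -(t ^ (2 * n))⁻¹ = -t ^ 2 := by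
    rw [← zpow_natCast t 2, ← zpow_mul, div_neg, neg_inj, div_inv_eq_mul, ← zpow_natCast,
      ← zpow_add₀ ht0]
    push_cast
    ring_nf
  have hratio : t ^ (1 - 2 * (n : ℤ)) = t * (t ^ (2 * n))⁻¹ := by
    rw [← zpow_natCast, ← zpow_neg, ← zpow_one_add₀ ht0]
    push_cast
    ring_nf
  have htelescope : qPoch (-1) (t ^ 2) n * (1 + t ^ (2 * n)) = 2 * qPoch (-t ^ 2) (t ^ 2) n := by
    simpa [pow_mul, one_add_one_eq_two] using qPoch_mul_one_sub (-1) (t ^ 2) n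
  have hpoch_t_pos := qPoch_pos (neg_nonpos.2 ht.le) (sq_nonneg t) n
  have hpoch_q_pos := qPoch_pos (neg_nonpos.2 (sq_nonneg t)) (sq_nonneg t) n
  rw [qPoch_eq_mul_qPoch_reflect (neg_ne_zero.2 (zpow_ne_zero _ ht0)) hq, hreflect_num,
    qPoch_eq_mul_qPoch_reflect (neg_ne_zero.2 (inv_ne_zero (pow_ne_zero _ ht0))) hq, hreflect_den,
    neg_neg, neg_neg, hratio, mul_pow]
  field_simp
  linear_combination htelescope

/-- the q-Saalschütz specialization. Here `t^{-(2n-1)} = t^(1 - 2n)`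
(as an integer power, valid also for `n = 0`). -/
theorem q_saalschutz_special (n : ℕ) (t : ℝ) (ht : 0 < t) (ht1 : t ≠ 1) :
    qPoch (-1) (t ^ 2) n * qPoch (-(t ^ (1 - 2 * (n : ℤ)))) (t ^ 2) n /
      (qPoch (-t) (t ^ 2) n * qPoch (-(t ^ (2 * n))⁻¹) (t ^ 2) n)
      = 2 * t ^ n / (1 + t ^ (2 * n)) :=
  q_saalschutz_special_general n t ht
end

section
/- For every integer n ≥ 1 and every real z with z ≠ 0 and z^2 ≠ -1 (e.g. real z > 0), the identity \sum_{i=1}^{n} (-1)^i binom(2i-1, i-1) (1-z^2)^{2i} / (2^{4i-1} z^{2i}) = ((1+z)^2/(1+z^2)) ( ((1+z)^{2n}/(2^{2n} z^n)) \sum_{s=0}^{n} binom(n+s, s) (-1)^s (1-z)^{2s}/(4^s z^s) - 1 ) holds. -/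
/-!
Substitute x = -(1 - z)² / (4z), so that 1 - x = (1 + z)² / (4z), 1 - 2x = (1 + z²) / (2z) and
x(1 - x) = -(1 - z²)² / (16z²). The identity becomes the polynomial identity
(1 - 2x) ∑_{i=1}^n 2 C(2i - 1, i - 1) (x(1 - x))^i = 2(1 - x)((1 - x)^n S_n(x) - 1), with
S_n(x) = ∑_{s=0}^n C(n + s, s) x^s. It telescopes by induction on n, since Pascal's rule gives
(1 - x) S_{n+1}(x) - S_n(x) = C(2n + 1, n) x^{n+1} (1 - 2x).
-/

open Finset

section PolynomialIdentity

variable {R : Type*} [CommRing R]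

theorem sum_range_choose_succ_add_sub (n : ℕ) (x : R) :
    ∑ s ∈ range (n + 1), ((n + 1 + s).choose s : R) * x ^ s
      - ∑ s ∈ range (n + 1), ((n + s).choose s : R) * x ^ s
      = x * ∑ s ∈ range n, ((n + 1 + s).choose s : R) * x ^ s := by
  rw [← sum_sub_distrib, sum_range_succ', mul_sum]
  simp only [add_zero, Nat.choose_zero_right, pow_zero, sub_self]
  refine sum_congr rfl fun s _ => ?_
  rw [show n + 1 + (s + 1) = n + 1 + s + 1 by omega, Nat.choose_succ_succ,
    show n + (s + 1) = n + 1 + s by omega]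
  push_cast
  ring

theorem one_sub_mul_sum_range_choose_succ_add_sub (n : ℕ) (x : R) :
    (1 - x) * ∑ s ∈ range (n + 2), ((n + 1 + s).choose s : R) * x ^ s
      - ∑ s ∈ range (n + 1), ((n + s).choose s : R) * x ^ s
      = ((2 * n + 1).choose n : R) * x ^ (n + 1) * (1 - 2 * x) := by
  have hpascal := sum_range_choose_succ_add_sub n x
  have hcentral : ((n + 1 + (n + 1)).choose (n + 1) : R) = 2 * ((2 * n + 1).choose n : R) := by
    rw [show n + 1 + (n + 1) = 2 * n + 1 + 1 by omega, Nat.choose_succ_succ, Nat.choose_symm_half]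
    push_cast
    ring
  rw [sum_range_succ _ n, show n + 1 + n = 2 * n + 1 by omega] at hpascal
  rw [sum_range_succ _ (n + 1), hcentral, sum_range_succ _ n, show n + 1 + n = 2 * n + 1 by omega]
  linear_combination hpascal

theorem one_sub_two_mul_sum_choose_mul_pow (x : R) (n : ℕ) :
    (1 - 2 * x) * ∑ i ∈ Icc 1 n, 2 * ((2 * i - 1).choose (i - 1) : R) * (x * (1 - x)) ^ i
      = 2 * (1 - x) * ((1 - x) ^ n * ∑ s ∈ range (n + 1), ((n + s).choose s : R) * x ^ s - 1) := by
  induction n with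
  | zero => simp
  | succ n ih =>
    rw [sum_Icc_succ_top (by omega), show 2 * (n + 1) - 1 = 2 * n + 1 by omega,
      Nat.add_sub_cancel, mul_pow]
    linear_combination ih - 2 * (1 - x) ^ (n + 1) * one_sub_mul_sum_range_choose_succ_add_sub n x

end PolynomialIdentity

theorem F_eq_G_general (n : ℕ) (z : ℝ) (hz : z ≠ 0) :
    ∑ i ∈ Finset.Icc 1 n,
        (-1 : ℝ) ^ i * (Nat.choose (2 * i - 1) (i - 1) : ℝ) *
          (1 - z ^ 2) ^ (2 * i) / (2 ^ (4 * i - 1) * z ^ (2 * i))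
      = ((1 + z) ^ 2 / (1 + z ^ 2)) *
          (((1 + z) ^ (2 * n) / (2 ^ (2 * n) * z ^ n)) *
              (∑ s ∈ Finset.range (n + 1),
                (Nat.choose (n + s) s : ℝ) * (-1 : ℝ) ^ s *
                  (1 - z) ^ (2 * s) / (4 ^ s * z ^ s)) - 1) := by
  set x : ℝ := -(1 - z) ^ 2 / (4 * z) with hx
  have h1x : 1 - x = (1 + z) ^ 2 / (4 * z) := by rw [hx]; field_simp; ring
  have h2x : 1 - 2 * x = (1 + z ^ 2) / (2 * z) := by rw [hx]; field_simp; ring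
  have hx1x : x * (1 - x) = -(1 - z ^ 2) ^ 2 / (16 * z ^ 2) := by rw [h1x, hx]; field_simp; ring
  have hterm : ∀ i ∈ Icc 1 n, (-1 : ℝ) ^ i * ((2 * i - 1).choose (i - 1) : ℝ) *
      (1 - z ^ 2) ^ (2 * i) / (2 ^ (4 * i - 1) * z ^ (2 * i))
        = 2 * ((2 * i - 1).choose (i - 1) : ℝ) * (x * (1 - x)) ^ i := by
    intro i hi
    have h16 : (16 : ℝ) ^ i = 2 ^ (4 * i - 1) * 2 := by
      rw [← pow_succ, Nat.sub_add_cancel (by grind), pow_mul]; norm_num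
    rw [hx1x, div_pow, neg_pow ((1 - z ^ 2) ^ 2), mul_pow, h16, ← pow_mul, ← pow_mul]
    field_simp
  have hcoeff : ∀ s ∈ range (n + 1), ((n + s).choose s : ℝ) * (-1) ^ s * (1 - z) ^ (2 * s) /
      (4 ^ s * z ^ s) = ((n + s).choose s : ℝ) * x ^ s := by
    intro s _
    rw [hx, div_pow, neg_pow ((1 - z) ^ 2), mul_pow, ← pow_mul]
    ring
  have hpow : (1 + z) ^ (2 * n) / (2 ^ (2 * n) * z ^ n) = (1 - x) ^ n := by
    rw [h1x, div_pow, mul_pow, pow_mul, pow_mul]; norm_num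
  have hfactor : (1 + z) ^ 2 / (1 + z ^ 2) = 2 * (1 - x) / (1 - 2 * x) := by
    rw [h1x, h2x]; field_simp; ring
  have h2x0 : 1 - 2 * x ≠ 0 := by rw [h2x]; positivity
  rw [sum_congr rfl hterm, sum_congr rfl hcoeff, hpow, hfactor, div_mul_eq_mul_div _ (1 - 2 * x),
    eq_div_iff h2x0, mul_comm]
  exact one_sub_two_mul_sum_choose_mul_pow x n

/-- F(n) = G(n) from the proof of Proposition `prop_limit`. -/
theorem F_eq_G (n : ℕ) (hn : 1 ≤ n) (z : ℝ) (hz : z ≠ 0) (hz2 : z ^ 2 ≠ -1) :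
    ∑ i ∈ Finset.Icc 1 n,
        (-1 : ℝ) ^ i * (Nat.choose (2 * i - 1) (i - 1) : ℝ) *
          (1 - z ^ 2) ^ (2 * i) / (2 ^ (4 * i - 1) * z ^ (2 * i))
      = ((1 + z) ^ 2 / (1 + z ^ 2)) *
          (((1 + z) ^ (2 * n) / (2 ^ (2 * n) * z ^ n)) *
              (∑ s ∈ Finset.range (n + 1),
                (Nat.choose (n + s) s : ℝ) * (-1 : ℝ) ^ s *
                  (1 - z) ^ (2 * s) / (4 ^ s * z ^ s)) - 1) :=
  F_eq_G_general n z hz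
end

section
/- For every integer n ≥ 0 and real z > 0: ((1+z)^2/(2z)) ( 1 + ((1+z^2)/(1+z)^2) \sum_{i=1}^{n} (-1)^i binom(2i-1, i-1) (1-z^2)^{2i}/(2^{4i-1} z^{2i}) ) = ((1+z)^{2n+2}/(2^{2n+1} z^{n+1})) \sum_{s=0}^{n} binom(n+s, s) (-1)^s (1-z)^{2s}/(4^s z^s). -/
/-!
With `y = -(1 - z)² / (4z)` one has `1 - y = (1 + z)² / (4z)`, `1 - 2y = (1 + z²) / (2z)` and
`y (1 - y) = -((1 - z²) / (4z))²`, which turns the claim into the polynomial identity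
`(1 - y) + (1 - 2y) ∑ᵢ C(2i-1, i-1) (y(1-y))ⁱ = (1 - y)ⁿ⁺¹ Sₙ(y)`, `Sₙ(y) = ∑_{s ≤ n} C(n+s, s) yˢ`.
It follows by induction on `n` from `(1 - y) Sₙ₊₁(y) = Sₙ(y) + (1 - 2y) C(2n+1, n) yⁿ⁺¹`,
a consequence of Pascal's rule.
-/

open Finset

section CommRing

variable {R : Type*} [CommRing R]

theorem sum_range_choose_succ_add_mul_pow (n m : ℕ) (x : R) :
    ∑ s ∈ range (m + 1), ((n + 1 + s).choose s : R) * x ^ s =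
      ∑ s ∈ range (m + 1), ((n + s).choose s : R) * x ^ s +
        x * ∑ s ∈ range m, ((n + 1 + s).choose s : R) * x ^ s := by
  induction m with
  | zero => simp
  | succ m ih =>
    have pascal : (n + 1 + (m + 1)).choose (m + 1) =
        (n + 1 + m).choose m + (n + (m + 1)).choose (m + 1) := by
      rw [show n + 1 + (m + 1) = n + 1 + m + 1 by omega, Nat.choose_succ_succ',
        show n + 1 + m = n + (m + 1) by omega]
    conv_lhs => rw [sum_range_succ, ih]
    rw [sum_range_succ (fun s => ((n + s).choose s : R) * x ^ s) (m + 1),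
      sum_range_succ (fun s => ((n + 1 + s).choose s : R) * x ^ s) m, pascal]
    push_cast
    ring

theorem one_sub_mul_sum_range_choose_add_mul_pow (n : ℕ) (x : R) :
    (1 - x) * ∑ s ∈ range (n + 2), ((n + 1 + s).choose s : R) * x ^ s =
      ∑ s ∈ range (n + 1), ((n + s).choose s : R) * x ^ s +
        (1 - 2 * x) * ((2 * n + 1).choose n : R) * x ^ (n + 1) := by
  have hsplit := sum_range_choose_succ_add_mul_pow n (n + 1) x
  have hA := sum_range_succ (fun s => ((n + 1 + s).choose s : R) * x ^ s) (n + 1)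
  have hB := sum_range_succ (fun s => ((n + s).choose s : R) * x ^ s) (n + 1)
  have hmid : (n + (n + 1)).choose (n + 1) = (2 * n + 1).choose n := by
    rw [show n + (n + 1) = 2 * n + 1 by omega, Nat.choose_symm_half]
  have hcentral : (n + 1 + (n + 1)).choose (n + 1) = 2 * (2 * n + 1).choose n := by
    rw [show n + 1 + (n + 1) = 2 * n + 1 + 1 by omega, Nat.choose_succ_succ', Nat.choose_symm_half]
    ring
  simp only [hmid, hcentral, Nat.cast_mul, Nat.cast_ofNat] at hA hB
  linear_combination hsplit + hB - x * hA

theorem one_sub_add_one_sub_two_mul_sum_Icc_choose_mul_pow (n : ℕ) (y : R) :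
    (1 - y) + (1 - 2 * y) * ∑ i ∈ Icc 1 n, ((2 * i - 1).choose (i - 1) : R) * (y * (1 - y)) ^ i =
      (1 - y) ^ (n + 1) * ∑ s ∈ range (n + 1), ((n + s).choose s : R) * y ^ s := by
  induction n with
  | zero => simp
  | succ n ih =>
    rw [sum_Icc_succ_top (by omega), show 2 * (n + 1) - 1 = 2 * n + 1 by omega, Nat.add_sub_cancel,
      mul_pow]
    linear_combination ih - (1 - y) ^ (n + 1) * one_sub_mul_sum_range_choose_add_mul_pow n y

end CommRing

section Field

variable {K : Type*} [Field K]

theorem sum_Icc_neg_one_pow_choose_div_eq [CharZero K] (n : ℕ) (z : K) :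
    ∑ i ∈ Icc 1 n, (-1 : K) ^ i * ((2 * i - 1).choose (i - 1) : K) *
        (1 - z ^ 2) ^ (2 * i) / (2 ^ (4 * i - 1) * z ^ (2 * i)) =
      2 * ∑ i ∈ Icc 1 n, ((2 * i - 1).choose (i - 1) : K) * (-((1 - z ^ 2) / (4 * z)) ^ 2) ^ i := by
  rw [mul_sum]
  refine sum_congr rfl fun i hi => ?_
  obtain ⟨j, rfl⟩ := Nat.exists_eq_add_of_le' (mem_Icc.mp hi).1
  rw [neg_pow (((1 - z ^ 2) / (4 * z)) ^ 2), ← pow_mul, div_pow, mul_pow,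
    show (4 : K) = 2 ^ 2 by norm_num, ← pow_mul, show 4 * (j + 1) - 1 = 4 * j + 3 by omega]
  ring

theorem sum_range_choose_neg_one_pow_div_eq (n : ℕ) (z : K) :
    ∑ s ∈ range (n + 1), ((n + s).choose s : K) * (-1 : K) ^ s * (1 - z) ^ (2 * s) /
        (4 ^ s * z ^ s) =
      ∑ s ∈ range (n + 1), ((n + s).choose s : K) * (-((1 - z) ^ 2 / (4 * z))) ^ s := by
  refine sum_congr rfl fun s _ => ?_
  rw [neg_pow ((1 - z) ^ 2 / (4 * z)), div_pow, mul_pow, ← pow_mul]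
  ring

end Field

/-- the limit symbol of the Dubuc–Deslauriers scheme. -/
theorem limit_symbol_eq (n : ℕ) (z : ℝ) (hz : 0 < z) :
    ((1 + z) ^ 2 / (2 * z)) *
        (1 + ((1 + z ^ 2) / (1 + z) ^ 2) *
            ∑ i ∈ Finset.Icc 1 n,
              (-1 : ℝ) ^ i * (Nat.choose (2 * i - 1) (i - 1) : ℝ) *
                (1 - z ^ 2) ^ (2 * i) / (2 ^ (4 * i - 1) * z ^ (2 * i)))
      = ((1 + z) ^ (2 * n + 2) / (2 ^ (2 * n + 1) * z ^ (n + 1))) *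
          ∑ s ∈ Finset.range (n + 1),
            (Nat.choose (n + s) s : ℝ) * (-1 : ℝ) ^ s *
              (1 - z) ^ (2 * s) / (4 ^ s * z ^ s) := by
  have hz0 : z ≠ 0 := hz.ne'
  have hz1 : 1 + z ≠ 0 := by positivity
  rw [sum_Icc_neg_one_pow_choose_div_eq, sum_range_choose_neg_one_pow_div_eq]
  set y : ℝ := -((1 - z) ^ 2 / (4 * z)) with hy
  have h1y : 1 - y = (1 + z) ^ 2 / (4 * z) := by rw [hy]; field_simp; ring
  have h12y : 1 - 2 * y = (1 + z ^ 2) / (2 * z) := by rw [hy]; field_simp; ring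
  have hyy : y * (1 - y) = -((1 - z ^ 2) / (4 * z)) ^ 2 := by rw [h1y, hy]; field_simp; ring
  have hpow : 2 * (1 - y) ^ (n + 1) = (1 + z) ^ (2 * n + 2) / (2 ^ (2 * n + 1) * z ^ (n + 1)) := by
    rw [h1y, div_pow, ← pow_mul, mul_pow, show (4 : ℝ) = 2 ^ 2 by norm_num, ← pow_mul]
    field_simp
    ring
  rw [← hyy, ← hpow, mul_assoc, ← one_sub_add_one_sub_two_mul_sum_Icc_choose_mul_pow, h1y, h12y]
  field_simp
  ring
end
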